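/- Let D be a GCD domain with fraction field K and let A ∈ D^{n×n} admit a permutation-free LD⁻¹U decomposition A = L · D_g^{−1} · U. Using the convention L_{0,0} = U_{0,0} = 1, for every k with 2 ≤ k ≤ n−1 the following hold: (i) gcd(L_{k−1,k−1}, L_{k,k−1}) divides gcd(L_{k−1,k−1}, L_{k,k−1}, L_{k−2,k−2}) · U_{k,j} for every j with 1 ≤ j ≤ n (i.e., the quotient gcd(L_{k−1,k−1}, L_{k,k−1})/gcd(L_{k−1,k−1}, L_{k,k−1}, L_{k−2,k−2}) divides every entry of the k-th row of U); and (ii) gcd(U_{k−1,k−1}, U_{k−1,k}) divides gcd(U_{k−1,k−1}, U_{k−1,k}, U_{k−2,k−2}) · L_{j,k} for every j with 1 ≤ j ≤ n. -/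

import Mathlib

/-- The diagonal matrix `D_g = diag(p₁, p₁p₂, p₂p₃, …, p_{n−1}p_n)` built from the
pivots `p : Fin n → D`. -/
def bareissDiag {D : Type*} [CommRing D] {n : ℕ} (p : Fin n → D) :
    Matrix (Fin n) (Fin n) D :=
  Matrix.diagonal fun i =>
    (if (i : ℕ) = 0 then 1
      else p ⟨(i : ℕ) - 1, lt_of_le_of_lt (Nat.sub_le _ _) i.isLt⟩) * p i

/-! Write `a = k - 2`, `b = k - 1` (0-based) and let `E` be the leading `(b+1) × (b+1)` block of
`A` with column `a` replaced by column `a` of `L` and column `b` replaced by column `j` of `A`.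
Because `L` is lower triangular, `E = L' D'⁻¹ F` for the leading blocks `L'`, `D'` and an upper
triangular `F` with diagonal `p₀, …, p_{a-1}, p_{a-1} p_a, U_{b,j}`, so comparing determinants
gives `det E = p_{a-1} U_{b,j}`. Column `a` of `E` is `(0, …, 0, L_{a,a}, L_{b,a})`, hence
`gcd(L_{a,a}, L_{b,a})` divides `det E`; here `p_i = L_{i,i}`. Part (ii) is part (i) for `Aᵀ = Uᵀ D_g⁻¹ Lᵀ`. -/

theorem dvd_gcd_gcd_mul_of_dvd_mul {α : Type*} [CommMonoidWithZero α] [GCDMonoid α]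
    {x y q u : α} (h : gcd x y ∣ q * u) : gcd x y ∣ gcd x (gcd y q) * u := by
  have hx : gcd x y ∣ x * u := (gcd_dvd_left x y).mul_right u
  have hy : gcd x y ∣ y * u := (gcd_dvd_right x y).mul_right u
  have hyq : gcd x y ∣ gcd y q * u := (dvd_gcd hy h).trans (gcd_mul_right' u y q).dvd
  exact (dvd_gcd hx hyq).trans (gcd_mul_right' u x (gcd y q)).dvd

namespace Matrix

theorem dvd_det_of_forall_dvd_col {R ι : Type*} [CommRing R] [Fintype ι] [DecidableEq ι]
    (M : Matrix ι ι R) (c : ι) {g : R} (h : ∀ i, g ∣ M i c) : g ∣ M.det := by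
  choose v hv using h
  have hcol : (fun i => M i c) = g • v := funext hv
  rw [← M.updateCol_eq_self c, hcol, det_updateCol_smul]
  exact dvd_mul_right _ _

theorem det_mul_det_eq_of_map_eq {D K ι : Type*} [CommRing D] [Field K] [Algebra D K]
    [FaithfulSMul D K] [Fintype ι] [DecidableEq ι] {E L G F : Matrix ι ι D} (hG : G.det ≠ 0)
    (h : E.map (algebraMap D K) =
      L.map (algebraMap D K) * (G.map (algebraMap D K))⁻¹ * F.map (algebraMap D K)) :
    E.det * G.det = L.det * F.det := by
  have hG' : (G.map (algebraMap D K)).det ≠ 0 := by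
    rw [← RingHom.mapMatrix_apply, ← RingHom.map_det]
    exact (map_ne_zero_iff _ (FaithfulSMul.algebraMap_injective D K)).mpr hG
  apply FaithfulSMul.algebraMap_injective D K
  simp only [map_mul, RingHom.map_det, RingHom.mapMatrix_apply, h, det_mul, det_nonsing_inv,
    Ring.inverse_eq_inv']
  field_simp

theorem IsLowerTriangular.submatrix_castLE_mul {R ι : Type*} [NonUnitalNonAssocSemiring R]
    {n k : ℕ} (hk : k ≤ n) {X : Matrix (Fin n) (Fin n) R} (hX : X.IsLowerTriangular)
    (Y : Matrix (Fin n) ι R) :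
    (X * Y).submatrix (Fin.castLE hk) id =
      X.submatrix (Fin.castLE hk) (Fin.castLE hk) * Y.submatrix (Fin.castLE hk) id := by
  ext i c
  refine (Fintype.sum_of_injective _ (Fin.castLE_injective hk) _ _ (fun s hs => ?_)
    fun _ => rfl).symm
  have hks : k ≤ (s : ℕ) := by
    by_contra! hsk
    exact hs ⟨⟨s, hsk⟩, rfl⟩
  have hXs : X (Fin.castLE hk i) s = 0 := hX (show (i : ℕ) < s by omega)
  simp [hXs]

theorem IsLowerTriangular.gcd_dvd_apply_castSucc_last {R : Type*} [CommMonoidWithZero R]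
    [GCDMonoid R] {m : ℕ} {L : Matrix (Fin (m + 2)) (Fin (m + 2)) R} (hL : L.IsLowerTriangular)
    (i : Fin (m + 2)) :
    gcd (L (Fin.last m).castSucc (Fin.last m).castSucc)
        (L (Fin.last (m + 1)) (Fin.last m).castSucc) ∣ L i (Fin.last m).castSucc := by
  induction i using Fin.lastCases with
  | last => exact gcd_dvd_right _ _
  | cast i =>
    induction i using Fin.lastCases with
    | last => exact gcd_dvd_left _ _
    | cast i =>
      have hLi : L i.castSucc.castSucc (Fin.last m).castSucc = 0 := hL (Fin.castSucc_lt_last i)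
      exact hLi ▸ dvd_zero _

theorem IsUpperTriangular.det_updateCol_single_updateCol_last {R : Type*} [CommRing R] {m : ℕ}
    {U : Matrix (Fin (m + 2)) (Fin (m + 2)) R} (hU : U.IsUpperTriangular) (x : R)
    (u : Fin (m + 2) → R) :
    ((U.updateCol (Fin.last m).castSucc (Pi.single (Fin.last m).castSucc x)).updateCol
        (Fin.last (m + 1)) u).det =
      (∏ i : Fin m, U i.castSucc.castSucc i.castSucc.castSucc) * x * u (Fin.last (m + 1)) := by
  have htri : ((U.updateCol (Fin.last m).castSucc (Pi.single (Fin.last m).castSucc x)).updateCol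
      (Fin.last (m + 1)) u).IsUpperTriangular := by
    intro i j hji
    have hj : j ≠ Fin.last (m + 1) := (hji.trans_le (Fin.le_last i)).ne
    rw [updateCol_ne hj, updateCol_apply]
    split_ifs with hja
    · subst hja
      exact Pi.single_eq_of_ne hji.ne' _
    · exact hU hji
  rw [det_of_isUpperTriangular htri, Fin.prod_univ_castSucc, Fin.prod_univ_castSucc]
  simp [(Fin.castSucc_lt_last _).ne]

end Matrix

section Pivots

open Matrix

variable {R : Type*} {n : ℕ}

def prevPivot [One R] (p : Fin n → R) (i : Fin n) : R :=
  if (i : ℕ) = 0 then 1 else p ⟨(i : ℕ) - 1, lt_of_le_of_lt (Nat.sub_le _ _) i.isLt⟩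

@[simp]
theorem prevPivot_zero [One R] (p : Fin (n + 1) → R) : prevPivot p 0 = 1 := rfl

@[simp]
theorem prevPivot_succ [One R] (p : Fin (n + 1) → R) (i : Fin n) :
    prevPivot p i.succ = p i.castSucc := rfl

theorem prevPivot_ne_zero [MulZeroOneClass R] [NeZero (1 : R)] {p : Fin n → R}
    (hp : ∀ i, p i ≠ 0) (i : Fin n) : prevPivot p i ≠ 0 := by
  unfold prevPivot
  split_ifs
  exacts [one_ne_zero, hp _]

theorem bareissDiag_eq_diagonal [CommRing R] (p : Fin n → R) :
    bareissDiag p = diagonal fun i => prevPivot p i * p i := rfl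

theorem transpose_bareissDiag [CommRing R] (p : Fin n → R) : (bareissDiag p)ᵀ = bareissDiag p :=
  diagonal_transpose _

theorem det_bareissDiag [CommRing R] {m : ℕ} (p : Fin (m + 1) → R) :
    (bareissDiag p).det = (∏ i : Fin m, p i.castSucc) * ∏ i, p i := by
  rw [bareissDiag_eq_diagonal, det_diagonal, Finset.prod_mul_distrib, Fin.prod_univ_succ]
  simp

theorem det_bareissDiag_ne_zero [CommRing R] [IsDomain R] {p : Fin n → R} (hp : ∀ i, p i ≠ 0) :
    (bareissDiag p).det ≠ 0 := by
  rw [bareissDiag_eq_diagonal, det_diagonal]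
  exact Finset.prod_ne_zero_iff.mpr fun i _ => mul_ne_zero (prevPivot_ne_zero hp i) (hp i)

theorem inv_map_bareissDiag {D K : Type*} [CommRing D] [IsDomain D] [Field K] [Algebra D K]
    [FaithfulSMul D K] {p : Fin n → D} (hp : ∀ i, p i ≠ 0) :
    ((bareissDiag p).map (algebraMap D K))⁻¹ =
      diagonal fun i => (algebraMap D K (prevPivot p i * p i))⁻¹ := by
  refine inv_eq_right_inv ?_
  rw [bareissDiag_eq_diagonal, diagonal_map (map_zero _), diagonal_mul_diagonal, ← diagonal_one]
  congr 1
  funext i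
  exact mul_inv_cancel₀ ((map_ne_zero_iff _ (FaithfulSMul.algebraMap_injective D K)).mpr
    (mul_ne_zero (prevPivot_ne_zero hp i) (hp i)))

end Pivots

section LDU

open Matrix

variable {D : Type*} [CommRing D]

structure IsBareissLDU (K : Type*) [Field K] [Algebra D K] {n : ℕ}
    (A L U : Matrix (Fin n) (Fin n) D) : Prop where
  lower : L.IsLowerTriangular
  upper : U.IsUpperTriangular
  diag_eq : ∀ i, U i i = L i i
  diag_ne_zero : ∀ i, L i i ≠ 0
  map_eq : A.map (algebraMap D K) =
    L.map (algebraMap D K) * ((bareissDiag fun i => L i i).map (algebraMap D K))⁻¹ *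
      U.map (algebraMap D K)

namespace IsBareissLDU

variable {K : Type*} [Field K] [Algebra D K]

theorem transpose {n : ℕ} {A L U : Matrix (Fin n) (Fin n) D} (h : IsBareissLDU K A L U) :
    IsBareissLDU K Aᵀ Uᵀ Lᵀ where
  lower := h.upper.transpose
  upper := fun _ _ hij => h.lower hij
  diag_eq i := (h.diag_eq i).symm
  diag_ne_zero i := by
    rw [transpose_apply, h.diag_eq]
    exact h.diag_ne_zero i
  map_eq := by
    have hpiv : (fun i => Uᵀ i i) = fun i => L i i := funext h.diag_eq
    rw [hpiv, transpose_map, h.map_eq, transpose_mul, transpose_mul, transpose_nonsing_inv,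
      ← transpose_map, ← transpose_map, ← transpose_map, transpose_bareissDiag,
      Matrix.mul_assoc]

variable [IsDomain D] [FaithfulSMul D K]

theorem map_submatrix_castLE {n k : ℕ} {A L U : Matrix (Fin n) (Fin n) D}
    (h : IsBareissLDU K A L U) (hk : k ≤ n) :
    (A.submatrix (Fin.castLE hk) id).map (algebraMap D K) =
      (L.submatrix (Fin.castLE hk) (Fin.castLE hk)).map (algebraMap D K) *
        ((bareissDiag fun i => L (Fin.castLE hk i) (Fin.castLE hk i)).map (algebraMap D K))⁻¹ *
        (U.submatrix (Fin.castLE hk) id).map (algebraMap D K) := by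
  have hlower : (L.map (algebraMap D K) *
      ((bareissDiag fun i => L i i).map (algebraMap D K))⁻¹).IsLowerTriangular := by
    rw [inv_map_bareissDiag h.diag_ne_zero]
    exact (h.lower.map _).mul (blockTriangular_diagonal _)
  rw [← submatrix_map, h.map_eq, hlower.submatrix_castLE_mul, inv_map_bareissDiag h.diag_ne_zero,
    inv_map_bareissDiag fun i => h.diag_ne_zero _]
  congr 1
  ext i j
  simp only [submatrix_apply, mul_diagonal, map_apply]
  -- `prevPivot` commutes with `Fin.castLE` definitionally
  rfl

variable [GCDMonoid D]

theorem gcd_dvd_prevPivot_mul_of_mulVec_eq {m : ℕ}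
    {A L U : Matrix (Fin (m + 2)) (Fin (m + 2)) D} (h : IsBareissLDU K A L U)
    {u w : Fin (m + 2) → D}
    (hw : algebraMap D K ∘ w = (L.map (algebraMap D K) *
      ((bareissDiag fun i => L i i).map (algebraMap D K))⁻¹) *ᵥ (algebraMap D K ∘ u)) :
    gcd (L (Fin.last m).castSucc (Fin.last m).castSucc)
        (L (Fin.last (m + 1)) (Fin.last m).castSucc) ∣
      prevPivot (fun i => L i i) (Fin.last m).castSucc * u (Fin.last (m + 1)) := by
  set a := (Fin.last m).castSucc
  set b := Fin.last (m + 1)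
  set E := (A.updateCol a fun i => L i a).updateCol b w
  set F := (U.updateCol a (Pi.single a (prevPivot (fun i => L i i) a * L a a))).updateCol b u
  have hEF : E.map (algebraMap D K) =
      L.map (algebraMap D K) * ((bareissDiag fun i => L i i).map (algebraMap D K))⁻¹ *
        F.map (algebraMap D K) := by
    simp only [E, F, map_updateCol, mul_updateCol, ← hw]
    rw [← h.map_eq]
    congr 2
    -- column `a` of `F` is `D_g e_a`, which `L D_g⁻¹` sends to column `a` of `L`
    funext i
    have hφ {x : D} (hx : x ≠ 0) : algebraMap D K x ≠ 0 :=
      (map_ne_zero_iff _ (FaithfulSMul.algebraMap_injective D K)).mpr hx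
    have hpa := hφ (h.diag_ne_zero a)
    have hqa := hφ (prevPivot_ne_zero h.diag_ne_zero a)
    rw [inv_map_bareissDiag h.diag_ne_zero]
    simp only [Function.comp_apply, mulVec, dotProduct, map_mul, _root_.mul_inv_rev,
      mul_diagonal, map_apply, Pi.single_apply, apply_ite, map_zero, mul_zero,
      Finset.sum_ite_eq', Finset.mem_univ, ↓reduceIte]
    field_simp
  have hdet := det_mul_det_eq_of_map_eq (det_bareissDiag_ne_zero h.diag_ne_zero) hEF
  rw [det_bareissDiag, det_of_isLowerTriangular _ h.lower,
    h.upper.det_updateCol_single_updateCol_last, Fin.prod_univ_castSucc] at hdet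
  have hE : E.det = prevPivot (fun i => L i i) a * u b := by
    simp only [h.diag_eq] at hdet
    have hP :
        (∏ i : Fin m, L i.castSucc.castSucc i.castSucc.castSucc) * L a a * ∏ i, L i i ≠ 0 :=
      mul_ne_zero (mul_ne_zero (Finset.prod_ne_zero_iff.mpr fun i _ => h.diag_ne_zero _)
        (h.diag_ne_zero a)) (Finset.prod_ne_zero_iff.mpr fun i _ => h.diag_ne_zero _)
    apply mul_right_cancel₀ hP
    linear_combination hdet
  rw [← hE]
  refine dvd_det_of_forall_dvd_col E a fun i => ?_
  have hEa : E i a = L i a := by simp [E, a, b, (Fin.castSucc_lt_last _).ne]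
  exact hEa ▸ h.lower.gcd_dvd_apply_castSucc_last i

theorem gcd_dvd_prevPivot_mul {n : ℕ} {A L U : Matrix (Fin n) (Fin n) D}
    (h : IsBareissLDU K A L U) (m : ℕ) (hm : m + 2 ≤ n) (j : Fin n) :
    gcd (L ⟨m, by omega⟩ ⟨m, by omega⟩) (L ⟨m + 1, hm⟩ ⟨m, by omega⟩) ∣
      prevPivot (fun i => L i i) ⟨m, by omega⟩ * U ⟨m + 1, hm⟩ j := by
  have hrows := h.map_submatrix_castLE hm
  have hblock : IsBareissLDU K (A.submatrix (Fin.castLE hm) (Fin.castLE hm))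
      (L.submatrix (Fin.castLE hm) (Fin.castLE hm))
      (U.submatrix (Fin.castLE hm) (Fin.castLE hm)) :=
    { lower := fun _ _ hij => h.lower hij
      upper := fun _ _ hij => h.upper hij
      diag_eq := fun _ => h.diag_eq _
      diag_ne_zero := fun _ => h.diag_ne_zero _
      map_eq := by
        simpa [submatrix_mul _ _ id id _ Function.bijective_id, submatrix_map] using
          congrArg (·.submatrix id (Fin.castLE hm)) hrows }
  refine hblock.gcd_dvd_prevPivot_mul_of_mulVec_eq (u := fun i => U (Fin.castLE hm i) j)
    (w := fun i => A (Fin.castLE hm i) j) ?_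
  funext i
  simpa [mulVec, dotProduct, mul_apply] using congrFun (congrFun hrows i) j

end IsBareissLDU

end LDU

/-- `k` is the paper's 1-based index while matrix entries are 0-based: `L ⟨k - 2, _⟩ ⟨k - 2, _⟩`
is the paper's `L_{k−1,k−1}`, and `if k = 2 then 1 else …` realises `L_{0,0} = U_{0,0} = 1`. -/
theorem stmt6 {D K : Type*} [CommRing D] [IsDomain D] [GCDMonoid D] [Field K]
    [Algebra D K] [IsFractionRing D K] {n : ℕ} (A L U : Matrix (Fin n) (Fin n) D)
    (hL : ∀ i j : Fin n, (i : ℕ) < (j : ℕ) → L i j = 0)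
    (hU : ∀ i j : Fin n, (j : ℕ) < (i : ℕ) → U i j = 0)
    (hdiag : ∀ i : Fin n, U i i = L i i)
    (hp : ∀ i : Fin n, L i i ≠ 0)
    (hA : A.map (algebraMap D K) =
      L.map (algebraMap D K) *
        ((bareissDiag fun i : Fin n => L i i).map (algebraMap D K))⁻¹ *
        U.map (algebraMap D K))
    (k : ℕ) (hk2 : 2 ≤ k) (hkn : k ≤ n - 1) :
    (∀ j : Fin n,
      gcd (L ⟨k - 2, by omega⟩ ⟨k - 2, by omega⟩) (L ⟨k - 1, by omega⟩ ⟨k - 2, by omega⟩) ∣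
        gcd (L ⟨k - 2, by omega⟩ ⟨k - 2, by omega⟩)
            (gcd (L ⟨k - 1, by omega⟩ ⟨k - 2, by omega⟩)
              (if k = 2 then 1 else L ⟨k - 3, by omega⟩ ⟨k - 3, by omega⟩)) *
          U ⟨k - 1, by omega⟩ j) ∧
    (∀ j : Fin n,
      gcd (U ⟨k - 2, by omega⟩ ⟨k - 2, by omega⟩) (U ⟨k - 2, by omega⟩ ⟨k - 1, by omega⟩) ∣
        gcd (U ⟨k - 2, by omega⟩ ⟨k - 2, by omega⟩)
            (gcd (U ⟨k - 2, by omega⟩ ⟨k - 1, by omega⟩)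
              (if k = 2 then 1 else U ⟨k - 3, by omega⟩ ⟨k - 3, by omega⟩)) *
          L j ⟨k - 1, by omega⟩) := by
  have h : IsBareissLDU K A L U :=
    ⟨fun i j hij => hL i j hij, fun i j hij => hU i j hij, hdiag, hp, hA⟩
  obtain ⟨m, rfl⟩ : ∃ m, k = m + 2 := ⟨k - 2, by omega⟩
  have hm : m + 2 ≤ n := by omega
  have hprev (p : Fin n → D) :
      prevPivot p ⟨m, by omega⟩ = if m + 2 = 2 then 1 else p ⟨m + 2 - 3, by omega⟩ := by
    simp only [prevPivot, add_eq_right]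
    rfl
  refine ⟨fun j => dvd_gcd_gcd_mul_of_dvd_mul ?_, fun j => dvd_gcd_gcd_mul_of_dvd_mul ?_⟩
  · rw [← hprev]
    exact h.gcd_dvd_prevPivot_mul m hm j
  · rw [← hprev]
    exact h.transpose.gcd_dvd_prevPivot_mul m hm j
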